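/- arXiv:math/0301102 — 4 statements merged into one kernel-verified Lean document; each statement's English description precedes it below -/
import Mathlib

section
/- Let λ₁, …, λₙ ∈ C̄⁺ be linearly independent vectors in the closed positive cone of a real quadratic space of signature (1, p−1), with n ≥ 2. Then for any A with 0 ≤ A ≤ 1 − 2/n, there exists a constant c > 0 such that Q(t₁λ₁ + ⋯ + tₙλₙ) ≥ c · t₁^{2/n + A} · (t₂⋯tₙ)^{2/n − A/(n−1)} uniformly for all t₁, …, tₙ ∈ ℝ_{≥0}. -/
/-
Transport `Q` by an isometry to the Lorentz form `x₀² - ∑ xᵢ²`, oriented so that `C⁺` lies in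
the half `x₀ > 0`; its closure is then contained in the closed forward cone. There `Q ≥ 0`, and for
linearly independent `x, y` in the cone the reverse Cauchy–Schwarz inequality is strict:
`(x, y) > 0`. Hence the expansion `Q (∑ tᵢ λᵢ) = ∑ tᵢ tⱼ (λᵢ, λⱼ)` dominates
`c ∑ wᵢⱼ tᵢ tⱼ` for any weights `w ≥ 0` with zero diagonal, and the weighted AM–GM inequality bounds
this sum below by `∏ tᵢ ^ eᵢ`, where `eᵢ` is the sum of the `i`-th row and column of `w`.
Weight `a` on the pairs containing `0` and `b` on all other pairs produces the exponents
`2/n + A` and `2/n - A/(n-1)`; the constraint `0 ≤ A ≤ 1 - 2/n` is exactly `a, b ≥ 0`.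
-/

open Finset QuadraticMap Filter Topology

theorem Real.prod_rpow_le_sum_weighted_mul {ι : Type*} [Fintype ι] {w : ι → ι → ℝ}
    (hw : ∀ i j, 0 ≤ w i j) (hw1 : ∑ i, ∑ j, w i j = 1) {t : ι → ℝ} (ht : ∀ i, 0 ≤ t i) :
    ∏ i, t i ^ (∑ j, w i j + ∑ j, w j i) ≤ ∑ i, ∑ j, w i j * (t i * t j) := by
  have amgm := Real.geom_mean_le_arith_mean_weighted univ (fun q : ι × ι => w q.1 q.2)
    (fun q => t q.1 * t q.2) (fun q _ => hw _ _) (by rwa [Fintype.sum_prod_type])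
    (fun q _ => mul_nonneg (ht _) (ht _))
  simp only [Real.mul_rpow (ht _) (ht _), Finset.prod_mul_distrib, Fintype.prod_prod_type,
    Fintype.sum_prod_type] at amgm
  rw [Finset.prod_comm (f := fun i j => t j ^ w i j)] at amgm
  convert amgm using 1
  simp only [← Real.rpow_sum_of_nonneg (ht _) (fun j _ => hw _ _), ← Finset.prod_mul_distrib]
  refine Finset.prod_congr rfl fun i _ => Real.rpow_add_of_nonneg (ht i) ?_ ?_
  · exact Finset.sum_nonneg fun j _ => hw _ _
  · exact Finset.sum_nonneg fun j _ => hw _ _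

theorem exists_pos_mul_le {ι : Type*} [Finite ι] {w b : ι → ℝ}
    (h : ∀ i, w i = 0 ∧ 0 ≤ b i ∨ 0 < b i) : ∃ c > 0, ∀ i, c * w i ≤ b i := by
  have small : ∀ i, ∀ᶠ c in 𝓝 (0 : ℝ), c * w i ≤ b i := by
    intro i
    rcases h i with ⟨hw, hb⟩ | hb
    · exact Eventually.of_forall fun c => by simpa [hw] using hb
    · have : Tendsto (fun c : ℝ => c * w i) (𝓝 0) (𝓝 0) :=
        (continuous_mul_const (w i)).tendsto' 0 0 (zero_mul _)
      exact (this.eventually (gt_mem_nhds hb)).mono fun c hc => hc.le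
  obtain ⟨c, hc, hpos⟩ := (((eventually_all.2 small).filter_mono nhdsWithin_le_nhds).and
    (self_mem_nhdsWithin : ∀ᶠ c in 𝓝[>] (0 : ℝ), 0 < c)).exists
  exact ⟨c, hpos, hc⟩

section QuadraticForm

variable {M : Type*} [AddCommGroup M] [Module ℝ M] (Q : QuadraticForm ℝ M)

theorem QuadraticForm.apply_sum_smul {ι : Type*} [Fintype ι] (t : ι → ℝ) (v : ι → M) :
    Q (∑ i, t i • v i) = ∑ i, ∑ j, t i * t j * associated Q (v i) (v j) := by
  rw [← associated_eq_self_apply ℝ Q]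
  simp only [map_sum, map_smul, LinearMap.sum_apply, LinearMap.smul_apply, smul_eq_mul]
  rw [Finset.sum_comm]
  simp only [Finset.mul_sum, mul_left_comm, mul_assoc]

theorem QuadraticForm.apply_smul_sub_smul (a b : ℝ) (x y : M) :
    Q (a • x - b • y) = a ^ 2 * Q x + b ^ 2 * Q y - 2 * a * b * associated Q x y := by
  rw [← associated_eq_self_apply ℝ Q, ← associated_eq_self_apply ℝ Q x,
    ← associated_eq_self_apply ℝ Q y]
  simp only [map_sub, map_smul, LinearMap.sub_apply, LinearMap.smul_apply, smul_eq_mul,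
    QuadraticMap.associated_isSymm ℝ Q y x]
  ring

theorem QuadraticForm.exists_pos_mul_prod_rpow_le {ι : Type*} [Fintype ι] {v : ι → M}
    (hdiag : ∀ i, 0 ≤ Q (v i)) (hoff : ∀ i j, i ≠ j → 0 < associated Q (v i) (v j))
    {w : ι → ι → ℝ} (hw : ∀ i j, 0 ≤ w i j) (hwdiag : ∀ i, w i i = 0)
    (hw1 : ∑ i, ∑ j, w i j = 1) :
    ∃ c > 0, ∀ t : ι → ℝ, (∀ i, 0 ≤ t i) →
      c * ∏ i, t i ^ (∑ j, w i j + ∑ j, w j i) ≤ Q (∑ i, t i • v i) := by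
  obtain ⟨c, hc, hcw⟩ : ∃ c > 0, ∀ q : ι × ι, c * w q.1 q.2 ≤ associated Q (v q.1) (v q.2) := by
    refine exists_pos_mul_le fun ⟨i, j⟩ => ?_
    rcases eq_or_ne i j with rfl | hij
    · exact .inl ⟨hwdiag i, by rw [associated_eq_self_apply]; exact hdiag i⟩
    · exact .inr (hoff i j hij)
  refine ⟨c, hc, fun t ht => ?_⟩
  calc c * ∏ i, t i ^ (∑ j, w i j + ∑ j, w j i)
      ≤ c * ∑ i, ∑ j, w i j * (t i * t j) :=
        mul_le_mul_of_nonneg_left (Real.prod_rpow_le_sum_weighted_mul hw hw1 ht) hc.le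
    _ = ∑ i, ∑ j, t i * t j * (c * w i j) := by
        simp only [Finset.mul_sum]; congr! 2; ring
    _ ≤ ∑ i, ∑ j, t i * t j * associated Q (v i) (v j) := by
        gcongr with i _ j _
        · exact mul_nonneg (ht i) (ht j)
        · exact hcw (i, j)
    _ = Q (∑ i, t i • v i) := (Q.apply_sum_smul t v).symm

end QuadraticForm

def starWeights (m : ℕ) (a b : ℝ) (i j : Fin (m + 2)) : ℝ :=
  if i = j then 0 else if i = 0 ∨ j = 0 then a else b

theorem starWeights_comm (m : ℕ) (a b : ℝ) (i j : Fin (m + 2)) :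
    starWeights m a b i j = starWeights m a b j i := by
  unfold starWeights; grind

theorem sum_starWeights (m : ℕ) (a b : ℝ) (i : Fin (m + 2)) :
    ∑ j, starWeights m a b i j = if i = 0 then (m + 1) * a else a + m * b := by
  rw [Fin.sum_univ_succ]
  rcases Fin.eq_zero_or_eq_succ i with rfl | ⟨k, rfl⟩
  · simp [starWeights, Fin.succ_ne_zero, eq_comm (a := (0 : Fin (m + 2)))]
  · simp [starWeights, Fin.succ_ne_zero, Fin.succ_inj, sum_ite, filter_ne]

theorem exists_weights_marginal_eq {m : ℕ} {A : ℝ} (hA0 : 0 ≤ A)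
    (hA1 : A ≤ 1 - 2 / (m + 2 : ℝ)) :
    ∃ w : Fin (m + 2) → Fin (m + 2) → ℝ, (∀ i j, 0 ≤ w i j) ∧ (∀ i, w i i = 0) ∧
      ∑ i, ∑ j, w i j = 1 ∧ ∀ i, ∑ j, w i j + ∑ j, w j i =
        if i = 0 then 2 / (m + 2 : ℝ) + A else 2 / (m + 2 : ℝ) - A / (m + 1 : ℝ) := by
  set a := (2 / (m + 2 : ℝ) + A) / (2 * (m + 1)) with ha_def
  set b := (1 - 2 / (m + 2 : ℝ) - A) / (m * (m + 1)) with hb_def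
  have ha : 2 * ((m + 1) * a) = 2 / (m + 2 : ℝ) + A := by
    rw [ha_def]; field_simp
  -- for `m = 0`, `b = x / 0` is junk but enters only as `m * b`, and the constraint forces `A = 0`
  have hb : 2 * (a + m * b) = 2 / (m + 2 : ℝ) - A / (m + 1 : ℝ) := by
    rcases eq_or_ne (m : ℝ) 0 with hm | hm
    · have : A = 0 := le_antisymm (by norm_num [hm] at hA1; exact hA1) hA0
      simp [ha_def, hm, this]
    · rw [ha_def, hb_def]; field_simp; ring
  have hmarg : ∀ i, ∑ j, starWeights m a b i j + ∑ j, starWeights m a b j i =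
      if i = 0 then 2 / (m + 2 : ℝ) + A else 2 / (m + 2 : ℝ) - A / (m + 1 : ℝ) := by
    intro i
    simp only [starWeights_comm m a b _ i, sum_starWeights, ← two_mul]
    split_ifs <;> assumption
  refine ⟨starWeights m a b, fun i j => ?_, fun i => if_pos rfl, ?_, hmarg⟩
  · unfold starWeights
    split_ifs
    · exact le_rfl
    · positivity
    · exact div_nonneg (by linarith) (by positivity)
  · have hsum : ∑ i : Fin (m + 2),
        (if i = 0 then 2 / (m + 2 : ℝ) + A else 2 / (m + 2 : ℝ) - A / (m + 1 : ℝ)) = 2 := by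
      rw [Fin.sum_univ_succ]
      simp only [if_pos, Fin.succ_ne_zero, if_false, sum_const, card_univ, Fintype.card_fin,
        nsmul_eq_mul]
      push_cast
      field_simp; ring
    rw [← Finset.sum_congr rfl fun i _ => hmarg i, sum_add_distrib,
      sum_comm (f := fun i j => starWeights m a b j i)] at hsum
    linarith

def lorentzForm (k : ℕ) : QuadraticForm ℝ (Fin (k + 1) → ℝ) :=
  weightedSumSquares ℝ fun i : Fin (k + 1) => if (i : ℕ) = 0 then (1 : ℝ) else -1

def forwardCone (k : ℕ) : Set (Fin (k + 1) → ℝ) :=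
  {x | 0 ≤ x 0 ∧ 0 ≤ lorentzForm k x}

namespace lorentzForm

variable {k : ℕ}

theorem apply (x : Fin (k + 1) → ℝ) : lorentzForm k x = x 0 ^ 2 - ∑ i : Fin k, x i.succ ^ 2 := by
  simp [lorentzForm, Fin.sum_univ_succ, pow_two, sub_eq_add_neg]

theorem continuous : Continuous (lorentzForm k) := by
  rw [show ⇑(lorentzForm k) = _ from funext apply]
  fun_prop

theorem eq_zero_of_apply_zero {z : Fin (k + 1) → ℝ} (hz0 : z 0 = 0)
    (hz : 0 ≤ lorentzForm k z) : z = 0 := by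
  rw [apply, hz0] at hz
  have hsq : ∀ i ∈ (univ : Finset (Fin k)), z i.succ ^ 2 = 0 :=
    (sum_eq_zero_iff_of_nonneg fun i _ => sq_nonneg _).1
      (le_antisymm (by linarith) (sum_nonneg fun i _ => sq_nonneg _))
  funext i
  cases i using Fin.cases with
  | zero => exact hz0
  | succ i => exact pow_eq_zero_iff two_ne_zero |>.1 (hsq i (mem_univ i))

theorem apply_zero_ne_zero {x : Fin (k + 1) → ℝ} (hx : 0 < lorentzForm k x) : x 0 ≠ 0 := by
  intro h0
  simp [eq_zero_of_apply_zero h0 hx.le] at hx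

end lorentzForm

namespace forwardCone

variable {k : ℕ}

theorem apply_zero_pos {x : Fin (k + 1) → ℝ} (hx : x ∈ forwardCone k) (hx0 : x ≠ 0) : 0 < x 0 :=
  hx.1.lt_of_ne fun h => hx0 (lorentzForm.eq_zero_of_apply_zero h.symm hx.2)

theorem isClosed : IsClosed (forwardCone k) :=
  (isClosed_le continuous_const (continuous_apply 0)).inter
    (isClosed_le continuous_const lorentzForm.continuous)

theorem associated_pos {x y : Fin (k + 1) → ℝ} (hx : x ∈ forwardCone k) (hy : y ∈ forwardCone k)
    (hxy : LinearIndependent ℝ ![x, y]) : 0 < associated (lorentzForm k) x y := by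
  have hx0 := apply_zero_pos hx (hxy.ne_zero 0)
  have hy0 := apply_zero_pos hy (hxy.ne_zero 1)
  by_contra! hneg
  -- `z` has vanishing time coordinate, so `lorentzForm k z ≤ 0` with equality only at `z = 0`
  have hz : y 0 • x - x 0 • y = 0 := by
    refine lorentzForm.eq_zero_of_apply_zero (by simp [mul_comm]) ?_
    rw [QuadraticForm.apply_smul_sub_smul]
    have := mul_nonneg (mul_nonneg hx0.le hy0.le) (neg_nonneg.2 hneg)
    nlinarith [mul_nonneg (sq_nonneg (y 0)) hx.2, mul_nonneg (sq_nonneg (x 0)) hy.2]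
  exact hy0.ne' (LinearIndependent.pair_iff.1 hxy (y 0) (-x 0)
    (by rw [neg_smul, ← sub_eq_add_neg, hz])).1

theorem closure_connectedComponentIn_subset {u : Fin (k + 1) → ℝ} (hu : 0 < lorentzForm k u)
    (hu0 : 0 < u 0) :
    closure (connectedComponentIn {x | 0 < lorentzForm k x} u) ⊆ forwardCone k := by
  have hQ : ∀ x ∈ connectedComponentIn {x | 0 < lorentzForm k x} u, 0 < lorentzForm k x :=
    fun x hx => connectedComponentIn_subset {x | 0 < lorentzForm k x} u hx
  have hpos : connectedComponentIn {x | 0 < lorentzForm k x} u ⊆ {x | 0 < x 0} :=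
    isPreconnected_connectedComponentIn.subset_left_of_subset_union
      (isOpen_lt continuous_const (continuous_apply 0))
      (isOpen_lt (continuous_apply 0) continuous_const)
      (Set.disjoint_left.2 fun x (h₁ : 0 < x 0) (h₂ : x 0 < 0) => h₁.not_gt h₂)
      (fun x hx => (lorentzForm.apply_zero_ne_zero (hQ x hx)).symm.lt_or_gt)
      ⟨u, mem_connectedComponentIn hu, hu0⟩
  exact closure_minimal (fun x hx => ⟨(hpos hx).le, (hQ x hx).le⟩) isClosed

end forwardCone

theorem QuadraticForm.Equivalent.exists_isometryEquiv_lorentzForm {V : Type*} [AddCommGroup V]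
    [Module ℝ V] {Q : QuadraticForm ℝ V} {k : ℕ} (h : Q.Equivalent (lorentzForm k)) {v : V}
    (hv : 0 < Q v) : ∃ f : Q.IsometryEquiv (lorentzForm k), 0 < f v 0 := by
  obtain ⟨f⟩ := h
  rcases (lorentzForm.apply_zero_ne_zero (k := k) (x := f v) (by rwa [f.map_app])).lt_or_gt
    with hneg | hpos
  · exact ⟨f.trans ⟨LinearEquiv.neg ℝ, QuadraticMap.map_neg _⟩, show 0 < -f v 0 from neg_pos.2 hneg⟩
  · exact ⟨f, hpos⟩

theorem QuadraticMap.IsometryEquiv.mapsTo_closure_connectedComponentIn {V W : Type*}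
    [NormedAddCommGroup V] [NormedSpace ℝ V] [FiniteDimensional ℝ V] [NormedAddCommGroup W]
    [NormedSpace ℝ W] {Q₁ : QuadraticForm ℝ V} {Q₂ : QuadraticForm ℝ W} (f : Q₁.IsometryEquiv Q₂)
    {v : V} (hv : 0 < Q₁ v) :
    Set.MapsTo f (closure (connectedComponentIn {x | 0 < Q₁ x} v))
      (closure (connectedComponentIn {y | 0 < Q₂ y} (f v))) := by
  have hf : Continuous f := f.toLinearEquiv.toLinearMap.continuous_of_finiteDimensional
  refine Set.MapsTo.closure (fun x hx => ?_) hf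
  refine connectedComponentIn_mono _ ?_ (hf.continuousOn.mapsTo_connectedComponentIn hv hx)
  rintro _ ⟨y, hy, rfl⟩
  simpa [f.map_app] using hy

/-- Let `λ₀, …, λ_{n-1}` (with `n = m + 2 ≥ 2`) be linearly independent vectors
in the closure of one connected component `C⁺` of the positive cone of a real quadratic
space of signature `(1, p-1)`.  Then for any `A` with `0 ≤ A ≤ 1 - 2/n` there is `c > 0`
such that `Q (t₀ λ₀ + ⋯ + t_{n-1} λ_{n-1}) ≥ c · t₀^(2/n + A) · (t₁ ⋯ t_{n-1})^(2/n - A/(n-1))`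
for all `t₀, …, t_{n-1} ≥ 0`. -/
theorem stmt3 {p m : ℕ} (hp : 1 ≤ p) {V : Type*} [NormedAddCommGroup V] [NormedSpace ℝ V]
    [FiniteDimensional ℝ V] (Q : QuadraticForm ℝ V)
    (hsig : Q.Equivalent (QuadraticMap.weightedSumSquares ℝ
      (fun i : Fin p => if (i : ℕ) = 0 then (1 : ℝ) else -1)))
    (v₀ : V) (hv₀ : 0 < Q v₀)
    (lam : Fin (m + 2) → V)
    (hlam : ∀ i, lam i ∈ closure (connectedComponentIn {v : V | 0 < Q v} v₀))
    (hindep : LinearIndependent ℝ lam)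
    (A : ℝ) (hA0 : 0 ≤ A) (hA1 : A ≤ 1 - 2 / (m + 2 : ℝ)) :
    ∃ c : ℝ, 0 < c ∧ ∀ t : Fin (m + 2) → ℝ, (∀ i, 0 ≤ t i) →
      c * (t 0) ^ (2 / (m + 2 : ℝ) + A) *
        (∏ i ∈ univ.erase 0, t i) ^ (2 / (m + 2 : ℝ) - A / (m + 1 : ℝ))
        ≤ Q (∑ i, t i • lam i) := by
  obtain ⟨k, rfl⟩ := Nat.exists_eq_add_of_le' hp
  obtain ⟨f, hf⟩ := QuadraticForm.Equivalent.exists_isometryEquiv_lorentzForm hsig hv₀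
  have hcone : ∀ i, f (lam i) ∈ forwardCone k := fun i =>
    forwardCone.closure_connectedComponentIn_subset (by rwa [f.map_app]) hf
      (f.mapsTo_closure_connectedComponentIn hv₀ (hlam i))
  have hind : LinearIndependent ℝ fun i => f (lam i) :=
    hindep.map' f.toLinearEquiv.toLinearMap f.toLinearEquiv.ker
  obtain ⟨w, hw, hwdiag, hw1, hmarg⟩ := exists_weights_marginal_eq hA0 hA1
  obtain ⟨c, hc, hbound⟩ := (lorentzForm k).exists_pos_mul_prod_rpow_le (fun i => (hcone i).2)
    (fun i j hij => forwardCone.associated_pos (hcone i) (hcone j) <|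
      LinearIndependent.pair_iff.2 <| (LinearIndepOn.pair_iff _ hij).1 (hind.linearIndepOn _))
    hw hwdiag hw1
  refine ⟨c, hc, fun t ht => ?_⟩
  have hQ : Q (∑ i, t i • lam i) = lorentzForm k (∑ i, t i • f (lam i)) := by
    rw [← f.map_app, map_sum]
    simp only [map_smul]
  have hprod : ∏ i, t i ^ (∑ j, w i j + ∑ j, w j i) = t 0 ^ (2 / (m + 2 : ℝ) + A) *
      (∏ i ∈ univ.erase 0, t i) ^ (2 / (m + 2 : ℝ) - A / (m + 1 : ℝ)) := by
    simp only [hmarg]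
    rw [← mul_prod_erase univ _ (mem_univ 0), if_pos rfl,
      prod_congr rfl fun i hi => by rw [if_neg (ne_of_mem_erase hi)],
      Real.finsetProd_rpow _ _ fun i _ => ht i]
  rw [mul_assoc, ← hprod, hQ]
  exact hbound t ht
end

section
/- Let λ₁, …, λₙ ∈ C̄⁺ be linearly independent vectors in the closed positive cone of a real quadratic space of signature (1, p−1), with n ≥ 2 and Q(λ₁) > 0. Then for any A with 0 ≤ A ≤ 2 − 2/n, there exists c > 0 such that Q(t₁λ₁ + ⋯ + tₙλₙ) ≥ c · t₁^{2/n + A} · (t₂⋯tₙ)^{2/n − A/(n−1)} for all t₁, …, tₙ ∈ ℝ_{≥0}. -/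
/-!
Signature `(1, p - 1)` provides a linear form `ℓ` such that `Q` is negative definite on `ker ℓ`.
Being connected and disjoint from `ker ℓ`, the cone component has constant sign under `ℓ`, so
`ℓ x ℓ y ≥ 0` for `x, y` in its closure. If moreover `(x, y) ≤ 0`, then `z = ℓ(x) y - ℓ(y) x ∈ ker ℓ`
has `Q z = ℓ(y)² Q x + ℓ(x)² Q y - ℓ(x) ℓ(y) (x, y) ≥ 0`, forcing `z = 0` and `x, y` dependent.
Hence `(λᵢ, λⱼ) > 0` for `i ≠ j`, and expanding,
`2 Q(∑ tᵢ λᵢ) = ∑ tᵢ tⱼ (λᵢ, λⱼ) ≥ c (t₁² + ∑_{i ≠ j} tᵢ tⱼ)`.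
Finally `t₁^a (t₂⋯tₙ)^b = (t₁²)^θ ((t₁⋯tₙ)^{2/n})^{1-θ}` with `θ = n A / (2 (n - 1)) ∈ [0, 1]`,
and weighted AM-GM bounds this by `t₁² + (t₁⋯tₙ)^{2/n}`, where `(t₁⋯tₙ)^{2/n}` is the geometric mean
of the products `tᵢ tⱼ`, `i ≠ j`.
-/

open Finset

namespace Finset

variable {ι M : Type*} [CommMonoid M]

theorem prod_offDiag_fst [DecidableEq ι] (s : Finset ι) (f : ι → M) :
    ∏ q ∈ s.offDiag, f q.1 = (∏ i ∈ s, f i) ^ (#s - 1) := by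
  rw [show s.offDiag = {q ∈ s ×ˢ s | q.1 ≠ q.2} by ext; simp [and_assoc], prod_filter,
    prod_product, ← prod_pow]
  refine prod_congr rfl fun i hi => ?_
  rw [← prod_filter, filter_ne]
  simp only [prod_const, card_erase_of_mem hi]

theorem prod_offDiag_snd [DecidableEq ι] (s : Finset ι) (f : ι → M) :
    ∏ q ∈ s.offDiag, f q.2 = (∏ i ∈ s, f i) ^ (#s - 1) := by
  rw [← prod_offDiag_fst]
  exact prod_nbij' Prod.swap Prod.swap (fun _ => by simp +contextual [eq_comm])
    (fun _ => by simp +contextual [eq_comm]) (by simp) (by simp) (by simp)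

theorem prod_offDiag_mul [DecidableEq ι] (s : Finset ι) (f : ι → M) :
    ∏ q ∈ s.offDiag, f q.1 * f q.2 = (∏ i ∈ s, f i) ^ (2 * (#s - 1)) := by
  rw [prod_mul_distrib, prod_offDiag_fst, prod_offDiag_snd, ← pow_add, two_mul]

end Finset

namespace Real

variable {ι : Type*} [DecidableEq ι]

theorem prod_rpow_two_div_card_le_sum_offDiag {s : Finset ι} (hs : 2 ≤ #s) {t : ι → ℝ}
    (ht : ∀ i ∈ s, 0 ≤ t i) :
    (∏ i ∈ s, t i) ^ (2 / #s : ℝ) ≤ (∑ q ∈ s.offDiag, t q.1 * t q.2) / #s.offDiag := by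
  have hs' : (2 : ℝ) ≤ #s := by exact_mod_cast hs
  have hK : (#s.offDiag : ℝ) = #s * (#s - 1) := by
    rw [offDiag_card, Nat.cast_sub (Nat.le_mul_self _)]; push_cast; ring
  have hKpos : (0 : ℝ) < #s.offDiag := by rw [hK]; nlinarith
  have hamgm := geom_mean_le_arith_mean s.offDiag (fun _ => 1) (fun q => t q.1 * t q.2)
    (fun _ _ => zero_le_one) (by simpa using hKpos)
    (fun q hq => by rw [mem_offDiag] at hq; exact mul_nonneg (ht _ hq.1) (ht _ hq.2.1))
  simp only [rpow_one, sum_const, nsmul_eq_mul, mul_one, one_mul, prod_offDiag_mul] at hamgm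
  convert hamgm using 1
  rw [← rpow_natCast, ← rpow_mul (prod_nonneg ht), hK, Nat.cast_mul, Nat.cast_sub (by omega)]
  congr 1
  push_cast
  field_simp [sub_ne_zero.2 (by linarith : (#s : ℝ) ≠ 1)]

theorem rpow_mul_prod_erase_rpow_le_sq_add_sum_offDiag {s : Finset ι} (hs : 2 ≤ #s) {i₀ : ι}
    (hi₀ : i₀ ∈ s) {A : ℝ} (hA0 : 0 ≤ A) (hA1 : A ≤ 2 - 2 / #s) {t : ι → ℝ}
    (ht : ∀ i ∈ s, 0 ≤ t i) :
    t i₀ ^ (2 / #s + A) * (∏ i ∈ s.erase i₀, t i) ^ (2 / #s - A / (#s - 1))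
      ≤ t i₀ ^ 2 + ∑ q ∈ s.offDiag, t q.1 * t q.2 := by
  have hn : (2 : ℝ) ≤ #s := by exact_mod_cast hs
  set n : ℝ := (#s : ℝ)
  have hn1 : n - 1 ≠ 0 := by linarith
  have ht₀ := ht i₀ hi₀
  have hprod : 0 ≤ ∏ i ∈ s, t i := prod_nonneg ht
  set θ := n * A / (2 * (n - 1)) with hθ
  have hθ0 : 0 ≤ θ := div_nonneg (by positivity) (by linarith)
  have hθ1 : θ ≤ 1 := by
    rw [div_le_one (by linarith)]
    have := mul_le_mul_of_nonneg_left hA1 (by linarith : 0 ≤ n)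
    rw [mul_sub, mul_div_cancel₀ _ (by positivity)] at this
    linarith
  have ha : 2 / n + A = 2 * θ + 2 / n * (1 - θ) := by rw [hθ]; field_simp; ring
  have hb : 2 / n - A / (n - 1) = 2 / n * (1 - θ) := by rw [hθ]; field_simp
  have hsum : 0 ≤ ∑ q ∈ s.offDiag, t q.1 * t q.2 := sum_nonneg fun q hq => by
    rw [mem_offDiag] at hq; exact mul_nonneg (ht _ hq.1) (ht _ hq.2.1)
  have hK : (1 : ℝ) ≤ #s.offDiag := by
    rw [Nat.one_le_cast, offDiag_card]
    exact Nat.le_sub_of_add_le (by nlinarith)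
  calc t i₀ ^ (2 / n + A) * (∏ i ∈ s.erase i₀, t i) ^ (2 / n - A / (n - 1))
      = (t i₀ ^ 2) ^ θ * ((∏ i ∈ s, t i) ^ (2 / n)) ^ (1 - θ) := by
        rw [ha, hb, rpow_add_of_nonneg ht₀ (by positivity) (by positivity), mul_assoc,
          ← mul_rpow ht₀ (prod_nonneg fun i hi => ht i (mem_of_mem_erase hi)),
          mul_prod_erase s t hi₀, rpow_mul hprod, rpow_mul ht₀, rpow_two]
    _ ≤ θ * t i₀ ^ 2 + (1 - θ) * (∏ i ∈ s, t i) ^ (2 / n) :=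
        geom_mean_le_arith_mean2_weighted hθ0 (by linarith) (sq_nonneg _)
          (rpow_nonneg hprod _) (by ring)
    _ ≤ t i₀ ^ 2 + (∑ q ∈ s.offDiag, t q.1 * t q.2) / #s.offDiag :=
        add_le_add (mul_le_of_le_one_left (sq_nonneg _) hθ1)
          ((mul_le_of_le_one_left (rpow_nonneg hprod _) (by linarith)).trans
            (prod_rpow_two_div_card_le_sum_offDiag hs ht))
    _ ≤ t i₀ ^ 2 + ∑ q ∈ s.offDiag, t q.1 * t q.2 := by
        gcongr
        exact div_le_self hsum hK

end Real

theorem LinearIndependent.pair_of_ne {ι R M : Type*} [Ring R] [AddCommGroup M] [Module R M]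
    {v : ι → M} (hv : LinearIndependent R v) {i j : ι} (hij : i ≠ j) :
    LinearIndependent R ![v i, v j] := by
  convert hv.comp ![i, j] ?_
  · ext k; fin_cases k <;> rfl
  · intro a b; fin_cases a <;> fin_cases b <;> simp [hij, hij.symm]

namespace QuadraticMap

theorem continuous_of_finiteDimensional {V : Type*} [NormedAddCommGroup V] [NormedSpace ℝ V]
    [FiniteDimensional ℝ V] (Q : QuadraticForm ℝ V) : Continuous Q := by
  let B : V →L[ℝ] V →L[ℝ] ℝ := LinearMap.toContinuousLinearMap
    (LinearMap.toContinuousLinearMap.toLinearMap ∘ₗ polarBilin Q)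
  have hB : ⇑Q = fun x => B x x / 2 := by
    ext x
    simp [B, polar_self]
  rw [hB]
  exact (B.continuous.clm_apply continuous_id).div_const 2

theorem two_mul_apply_sum_smul {R M ι : Type*} [CommRing R] [AddCommGroup M] [Module R M]
    [Fintype ι] (Q : QuadraticForm R M) (v : ι → M) (t : ι → R) :
    2 * Q (∑ i, t i • v i) = ∑ q : ι × ι, t q.1 * t q.2 * polar Q (v q.1) (v q.2) := by
  rw [two_mul, ← two_nsmul, ← polar_self, ← polarBilin_apply_apply, Fintype.sum_prod_type]
  simp only [map_sum, map_smul, LinearMap.sum_apply, LinearMap.smul_apply,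
    polarBilin_apply_apply, smul_eq_mul, mul_sum]
  exact sum_congr rfl fun i _ => sum_congr rfl fun j _ => by rw [polar_comm, mul_assoc]

theorem exists_pos_mul_le_apply_sum_smul {V ι : Type*} [AddCommGroup V] [Module ℝ V]
    [Fintype ι] [DecidableEq ι] (Q : QuadraticForm ℝ V) {v : ι → V} (i₀ : ι)
    (h₀ : 0 < Q (v i₀)) (hv : ∀ i, 0 ≤ Q (v i))
    (hpolar : ∀ i j, i ≠ j → 0 < polar Q (v i) (v j)) :
    ∃ c > 0, ∀ t : ι → ℝ, (∀ i, 0 ≤ t i) →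
      c * (t i₀ ^ 2 + ∑ q ∈ univ.offDiag, t q.1 * t q.2) ≤ Q (∑ i, t i • v i) := by
  set d : ι × ι → ℝ := fun q => polar Q (v q.1) (v q.2)
  have hdiag : ∀ i, d (i, i) = 2 * Q (v i) := fun i => by
    simp only [d, polar_self, two_nsmul, two_mul]
  have hd : ∀ q, 0 ≤ d q := fun ⟨i, j⟩ => by
    rcases eq_or_ne i j with rfl | hij
    · rw [hdiag]; linarith [hv i]
    · exact (hpolar i j hij).le
  set T := insert (i₀, i₀) (univ : Finset ι).offDiag
  have hT : T.Nonempty := insert_nonempty _ _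
  have hdT : ∀ q ∈ T, 0 < d q := by
    simp only [T, mem_insert, mem_offDiag, mem_univ, true_and]
    rintro ⟨i, j⟩ (h | hij)
    · cases h; rw [hdiag]; linarith
    · exact hpolar i j hij
  refine ⟨T.inf' hT d / 2, half_pos ((lt_inf'_iff hT).2 hdT), fun t ht => ?_⟩
  have hnotmem : (i₀, i₀) ∉ (univ : Finset ι).offDiag := by simp
  have key : T.inf' hT d * (t i₀ ^ 2 + ∑ q ∈ univ.offDiag, t q.1 * t q.2)
      ≤ 2 * Q (∑ i, t i • v i) :=
    calc T.inf' hT d * (t i₀ ^ 2 + ∑ q ∈ univ.offDiag, t q.1 * t q.2)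
        = ∑ q ∈ T, T.inf' hT d * (t q.1 * t q.2) := by
          rw [sum_insert hnotmem, ← mul_sum, mul_add, pow_two]
      _ ≤ ∑ q ∈ T, t q.1 * t q.2 * d q := sum_le_sum fun q hq => by
          rw [mul_comm]
          exact mul_le_mul_of_nonneg_left (inf'_le _ hq) (mul_nonneg (ht _) (ht _))
      _ ≤ ∑ q, t q.1 * t q.2 * d q :=
          sum_le_univ_sum_of_nonneg fun q => mul_nonneg (mul_nonneg (ht _) (ht _)) (hd q)
      _ = 2 * Q (∑ i, t i • v i) := (two_mul_apply_sum_smul Q v t).symm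
  linarith

def NegDefOnKer {V : Type*} [AddCommGroup V] [Module ℝ V] (Q : QuadraticForm ℝ V)
    (ℓ : V →ₗ[ℝ] ℝ) : Prop :=
  ∀ x, ℓ x = 0 → x ≠ 0 → Q x < 0

theorem exists_negDefOnKer_of_equivalent_weightedSumSquares {p : ℕ} (hp : 1 ≤ p) {V : Type*}
    [AddCommGroup V] [Module ℝ V] {Q : QuadraticForm ℝ V}
    (hsig : Q.Equivalent (weightedSumSquares ℝ
      (fun i : Fin p => if (i : ℕ) = 0 then (1 : ℝ) else -1))) :
    ∃ ℓ : V →ₗ[ℝ] ℝ, NegDefOnKer Q ℓ := by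
  obtain ⟨g⟩ := hsig
  refine ⟨(LinearMap.proj ⟨0, hp⟩).comp g.toLinearEquiv.toLinearMap, fun x hx hx0 => ?_⟩
  replace hx : g x ⟨0, hp⟩ = 0 := hx
  obtain ⟨j, hj⟩ := Function.ne_iff.1 ((map_ne_zero_iff g.toLinearEquiv g.injective).2 hx0)
  have hj0 : (j : ℕ) ≠ 0 := fun h => hj (by rwa [show j = ⟨0, hp⟩ from Fin.ext h])
  rw [← g.map_app, weightedSumSquares_apply, ← neg_pos, ← sum_neg_distrib]
  refine sum_pos' (fun i _ => ?_) ⟨j, mem_univ _, ?_⟩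
  · split_ifs with hi
    · rw [show i = ⟨0, hp⟩ from Fin.ext hi, hx]; simp
    · simpa using mul_self_nonneg _
  · simpa [hj0] using hj

namespace NegDefOnKer

variable {V : Type*}

section Algebraic

variable [AddCommGroup V] [Module ℝ V] {Q : QuadraticForm ℝ V} {ℓ : V →ₗ[ℝ] ℝ} {x y : V}

theorem apply_nonpos (hℓ : NegDefOnKer Q ℓ) (hx : ℓ x = 0) : Q x ≤ 0 := by
  rcases eq_or_ne x 0 with rfl | hx0
  · rw [QuadraticMap.map_zero]
  · exact (hℓ x hx hx0).le

theorem eq_zero_of_apply_nonneg (hℓ : NegDefOnKer Q ℓ) (hx : ℓ x = 0) (hQx : 0 ≤ Q x) :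
    x = 0 := by
  by_contra hx0
  exact (hℓ x hx hx0).not_ge hQx

theorem map_ne_zero_of_apply_pos (hℓ : NegDefOnKer Q ℓ) (hQx : 0 < Q x) : ℓ x ≠ 0 :=
  fun h => (hℓ.apply_nonpos h).not_gt hQx

theorem polar_pos_of_linearIndependent (hℓ : NegDefOnKer Q ℓ)
    (hxy : LinearIndependent ℝ ![x, y]) (hx : 0 ≤ Q x) (hy : 0 ≤ Q y)
    (hsign : 0 ≤ ℓ x * ℓ y) : 0 < polar Q x y := by
  by_contra! hpolar
  set z := (-ℓ y) • x + ℓ x • y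
  have hz : ℓ z = 0 := by simp only [z, map_add, map_smul, smul_eq_mul]; ring
  have hQz : Q z = ℓ y ^ 2 * Q x + ℓ x ^ 2 * Q y - ℓ x * ℓ y * polar Q x y := by
    simp only [z, QuadraticMap.map_add, QuadraticMap.map_smul, polar_smul_left,
      polar_smul_right, smul_eq_mul]
    ring
  have hz0 : z = 0 := hℓ.eq_zero_of_apply_nonneg hz (by
    rw [hQz]; nlinarith [mul_nonneg (sq_nonneg (ℓ y)) hx, mul_nonneg (sq_nonneg (ℓ x)) hy,
      mul_nonneg hsign (neg_nonneg.2 hpolar)])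
  obtain ⟨-, hℓx⟩ := LinearIndependent.pair_iff.1 hxy _ _ hz0
  exact hxy.ne_zero 0 (hℓ.eq_zero_of_apply_nonneg hℓx hx)

end Algebraic

variable [NormedAddCommGroup V] [NormedSpace ℝ V] [FiniteDimensional ℝ V]
  {Q : QuadraticForm ℝ V} {ℓ : V →ₗ[ℝ] ℝ} {u v x y : V}

theorem apply_pos_and_mul_pos_of_mem_connectedComponentIn (hℓ : NegDefOnKer Q ℓ)
    (hv : v ∈ connectedComponentIn {x | 0 < Q x} u) : 0 < Q v ∧ 0 < ℓ v * ℓ u := by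
  set S := connectedComponentIn {x | 0 < Q x} u
  have hS : ∀ w ∈ S, 0 < Q w := fun w hw =>
    connectedComponentIn_subset (F := {x | 0 < Q x}) (x := u) hw
  have hu : u ∈ S := mem_connectedComponentIn (connectedComponentIn_nonempty_iff.1 ⟨v, hv⟩)
  have hℓu := hℓ.map_ne_zero_of_apply_pos (hS u hu)
  refine ⟨hS v hv, not_le.1 fun hle => ?_⟩
  -- `ℓ` cannot change sign on the preconnected set `S`, which avoids `ker ℓ`.
  obtain ⟨w, hw, hw0⟩ := isPreconnected_connectedComponentIn.intermediate_value hv hu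
    ((ℓ.continuous_of_finiteDimensional.mul continuous_const).continuousOn)
    ⟨hle, mul_self_nonneg (ℓ u)⟩
  have hℓw : ℓ w = 0 := (mul_eq_zero.1 hw0).resolve_right hℓu
  exact (hℓ.apply_nonpos hℓw).not_gt (hS w hw)

theorem apply_nonneg_and_mul_nonneg_of_mem_closure (hℓ : NegDefOnKer Q ℓ)
    (hx : x ∈ closure (connectedComponentIn {x | 0 < Q x} u)) : 0 ≤ Q x ∧ 0 ≤ ℓ x * ℓ u := by
  refine (closure_minimal (t := {x | 0 ≤ Q x ∧ 0 ≤ ℓ x * ℓ u}) (fun v hv => ?_) ?_) hx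
  · exact (hℓ.apply_pos_and_mul_pos_of_mem_connectedComponentIn hv).imp le_of_lt le_of_lt
  · exact (isClosed_le continuous_const (QuadraticMap.continuous_of_finiteDimensional Q)).inter
      (isClosed_le continuous_const (ℓ.continuous_of_finiteDimensional.mul continuous_const))

theorem polar_pos_of_mem_closure (hℓ : NegDefOnKer Q ℓ) (hu : 0 < Q u)
    (hx : x ∈ closure (connectedComponentIn {x | 0 < Q x} u))
    (hy : y ∈ closure (connectedComponentIn {x | 0 < Q x} u))
    (hxy : LinearIndependent ℝ ![x, y]) : 0 < polar Q x y := by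
  obtain ⟨hQx, hxu⟩ := hℓ.apply_nonneg_and_mul_nonneg_of_mem_closure hx
  obtain ⟨hQy, hyu⟩ := hℓ.apply_nonneg_and_mul_nonneg_of_mem_closure hy
  have hu2 : 0 < ℓ u * ℓ u := mul_self_pos.2 (hℓ.map_ne_zero_of_apply_pos hu)
  refine hℓ.polar_pos_of_linearIndependent hxy hQx hQy (nonneg_of_mul_nonneg_left ?_ hu2)
  nlinarith [mul_nonneg hxu hyu]

end NegDefOnKer

end QuadraticMap

/-- Same setting as Statement 3, but with the additional hypothesis
`Q λ₀ > 0`; then the conclusion holds for the larger range `0 ≤ A ≤ 2 - 2/n`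
(with `n = m + 2 ≥ 2`). -/
theorem stmt4 {p m : ℕ} (hp : 1 ≤ p) {V : Type*} [NormedAddCommGroup V] [NormedSpace ℝ V]
    [FiniteDimensional ℝ V] (Q : QuadraticForm ℝ V)
    (hsig : Q.Equivalent (QuadraticMap.weightedSumSquares ℝ
      (fun i : Fin p => if (i : ℕ) = 0 then (1 : ℝ) else -1)))
    (v₀ : V) (hv₀ : 0 < Q v₀)
    (lam : Fin (m + 2) → V)
    (hlam : ∀ i, lam i ∈ closure (connectedComponentIn {v : V | 0 < Q v} v₀))
    (hindep : LinearIndependent ℝ lam)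
    (hpos : 0 < Q (lam 0))
    (A : ℝ) (hA0 : 0 ≤ A) (hA1 : A ≤ 2 - 2 / (m + 2 : ℝ)) :
    ∃ c : ℝ, 0 < c ∧ ∀ t : Fin (m + 2) → ℝ, (∀ i, 0 ≤ t i) →
      c * (t 0) ^ (2 / (m + 2 : ℝ) + A) *
        (∏ i ∈ univ.erase 0, t i) ^ (2 / (m + 2 : ℝ) - A / (m + 1 : ℝ))
        ≤ Q (∑ i, t i • lam i) := by
  obtain ⟨ℓ, hℓ⟩ := QuadraticMap.exists_negDefOnKer_of_equivalent_weightedSumSquares hp hsig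
  obtain ⟨c, hc, hcQ⟩ := QuadraticMap.exists_pos_mul_le_apply_sum_smul Q 0 hpos
    (fun i => (hℓ.apply_nonneg_and_mul_nonneg_of_mem_closure (hlam i)).1)
    (fun i j hij => hℓ.polar_pos_of_mem_closure hv₀ (hlam i) (hlam j) (hindep.pair_of_ne hij))
  refine ⟨c, hc, fun t ht => ?_⟩
  have hamgm := Real.rpow_mul_prod_erase_rpow_le_sq_add_sum_offDiag (s := univ) (by simp)
    (mem_univ 0) hA0 (by simpa using hA1) (fun i _ => ht i)
  simp only [card_univ, Fintype.card_fin, Nat.cast_add, Nat.cast_ofNat,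
    show (m : ℝ) + 2 - 1 = m + 1 by ring] at hamgm
  calc c * t 0 ^ (2 / (m + 2 : ℝ) + A) *
        (∏ i ∈ univ.erase 0, t i) ^ (2 / (m + 2 : ℝ) - A / (m + 1 : ℝ))
      ≤ c * (t 0 ^ 2 + ∑ q ∈ univ.offDiag, t q.1 * t q.2) := by
        rw [mul_assoc]; gcongr
    _ ≤ Q (∑ i, t i • lam i) := hcQ t ht
end

section
/- Let λ₁, …, λ_μ be vectors in the closed positive cone C̄⁺ of a real quadratic space of signature (1, p−1), linearly independent, with μ ≥ 2. Then for all r₁, …, r_μ ∈ (0, R] with 0 < R < 1, there is a constant c > 0 (independent of the rᵢ) with Q(λ₁ log r₁ + ⋯ + λ_μ log r_μ) ≥ c |log r₁| (|log r₂| ⋯ |log r_μ|)^{1/(μ−1)}. -/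
/-!
Choose coordinates in which `Q x = ⟪u, x⟫² - ‖x‖²` (for the signature `(1, p - 1)` form one may
take `u = √2 e₀`, flipping its sign so that `⟪u, v₀⟫ > 0`). The closure of the component of
`{Q > 0}` through `v₀` then lies in the closed cone `‖x‖ ≤ ⟪u, x⟫`, and on that cone Cauchy–Schwarz
reverses: the polar form `B x y = ⟪u, x⟫⟪u, y⟫ - ⟪x, y⟫` is nonnegative, and positive unless `x`
and `y` are proportional. Writing `log rᵢ = -sᵢ` with `sᵢ > 0`, every term of
`Q (∑ sᵢ λᵢ) = ∑ sᵢ sⱼ B λᵢ λⱼ` is nonnegative, so `Q ≥ c s₀ (s₁ + ⋯ + s_{μ-1})` with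
`c = min_{j ≠ 0} B λ₀ λⱼ > 0`, and AM–GM bounds `s₁ + ⋯ + s_{μ-1}` below by
`(s₁ ⋯ s_{μ-1})^{1/(μ-1)}`.
-/

open Finset

open scoped RealInnerProductSpace

theorem QuadraticForm.map_sum_smul {ι R M : Type*} [CommRing R] [Invertible (2 : R)]
    [AddCommGroup M] [Module R M] (Q : QuadraticForm R M) (s : Finset ι) (t : ι → R) (v : ι → M) :
    Q (∑ i ∈ s, t i • v i) =
      ∑ i ∈ s, ∑ j ∈ s, t i * t j * QuadraticMap.associated Q (v i) (v j) := by
  rw [← QuadraticMap.associated_eq_self_apply R Q]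
  simp only [map_sum, map_smul, LinearMap.sum_apply, LinearMap.smul_apply, smul_eq_mul, mul_sum]
  exact sum_comm.trans (sum_congr rfl fun i _ => sum_congr rfl fun j _ => by ring)

theorem Real.prod_rpow_inv_card_le_sum {ι : Type*} {s : Finset ι} (hs : s.Nonempty) {z : ι → ℝ}
    (hz : ∀ i ∈ s, 0 ≤ z i) : (∏ i ∈ s, z i) ^ ((#s : ℝ)⁻¹) ≤ ∑ i ∈ s, z i := by
  have hcard : (1 : ℝ) ≤ #s := by exact_mod_cast hs.card_pos
  have := Real.geom_mean_le_arith_mean s 1 z (fun _ _ => zero_le_one) (by simpa using hs) hz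
  simp only [Pi.one_apply, Real.rpow_one, sum_const, nsmul_eq_mul, mul_one, one_mul] at this
  exact this.trans (div_le_self (sum_nonneg hz) hcard)

theorem mul_sum_erase_le_sum_sum {ι : Type*} [Fintype ι] [DecidableEq ι] {b : ι → ι → ℝ}
    {s : ι → ℝ} (hb : ∀ i j, 0 ≤ b i j) (hs : ∀ i, 0 ≤ s i) {i₀ : ι} {c : ℝ}
    (hc : ∀ j ≠ i₀, c ≤ b i₀ j) :
    c * s i₀ * ∑ j ∈ univ.erase i₀, s j ≤ ∑ i, ∑ j, s i * s j * b i j := by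
  have hterm : ∀ i j, 0 ≤ s i * s j * b i j := fun i j =>
    mul_nonneg (mul_nonneg (hs i) (hs j)) (hb i j)
  calc c * s i₀ * ∑ j ∈ univ.erase i₀, s j
      ≤ ∑ j ∈ univ.erase i₀, s i₀ * s j * b i₀ j := by
        rw [mul_sum]
        refine sum_le_sum fun j hj => ?_
        linarith [mul_le_mul_of_nonneg_left (hc j (ne_of_mem_erase hj))
          (mul_nonneg (hs i₀) (hs j))]
    _ ≤ ∑ j, s i₀ * s j * b i₀ j :=
        sum_le_sum_of_subset_of_nonneg (subset_univ _) fun j _ _ => hterm i₀ j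
    _ ≤ ∑ i, ∑ j, s i * s j * b i j :=
        single_le_sum (f := fun i => ∑ j, s i * s j * b i j)
          (fun i _ => sum_nonneg fun j _ => hterm i j) (mem_univ i₀)

section Lorentz

variable {E : Type*} [NormedAddCommGroup E] [InnerProductSpace ℝ E]

noncomputable def lorentzBilin (u : E) : LinearMap.BilinForm ℝ E :=
  LinearMap.BilinForm.linMulLin (innerₗ E u) (innerₗ E u) - innerₗ E

theorem lorentzBilin_apply (u x y : E) : lorentzBilin u x y = ⟪u, x⟫ * ⟪u, y⟫ - ⟪x, y⟫ := rfl

theorem lorentzBilin_comm (u x y : E) : lorentzBilin u x y = lorentzBilin u y x := by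
  simp only [lorentzBilin_apply, real_inner_comm x y, mul_comm]

theorem lorentzBilin_neg (u : E) : lorentzBilin (-u) = lorentzBilin u := by
  ext x y
  simp only [lorentzBilin_apply, inner_neg_left, neg_mul_neg]

theorem lorentzBilin_self_pos_iff {u x : E} : 0 < lorentzBilin u x x ↔ ‖x‖ < |⟪u, x⟫| := by
  rw [lorentzBilin_apply, real_inner_self_eq_norm_sq, sub_pos, ← sq, sq_lt_sq, abs_norm]

theorem exists_lorentzBilin_eq_and_norm_lt_inner {u x : E} (hx : 0 < lorentzBilin u x x) :
    ∃ u' : E, lorentzBilin u' = lorentzBilin u ∧ ‖x‖ < ⟪u', x⟫ := by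
  rcases lt_abs.mp (lorentzBilin_self_pos_iff.mp hx) with h | h
  · exact ⟨u, rfl, h⟩
  · exact ⟨-u, lorentzBilin_neg u, by rwa [inner_neg_left]⟩

theorem closure_connectedComponentIn_subset {u v : E} (hv : ‖v‖ < ⟪u, v⟫) :
    closure (connectedComponentIn {x | 0 < lorentzBilin u x x} v) ⊆ {x | ‖x‖ ≤ ⟪u, x⟫} := by
  have hcont : Continuous fun x : E => ⟪u, x⟫ := continuous_const.inner continuous_id
  have hsplit : {x | 0 < lorentzBilin u x x} ⊆ {x | ‖x‖ < ⟪u, x⟫} ∪ {x | ‖x‖ < -⟪u, x⟫} :=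
    fun x hx => lt_abs.mp (lorentzBilin_self_pos_iff.mp hx)
  have hdisj : Disjoint {x : E | ‖x‖ < ⟪u, x⟫} {x | ‖x‖ < -⟪u, x⟫} :=
    Set.disjoint_left.mpr fun x (h₁ : ‖x‖ < _) (h₂ : ‖x‖ < _) => by linarith [norm_nonneg x]
  have hv₀ : v ∈ {x | 0 < lorentzBilin u x x} :=
    lorentzBilin_self_pos_iff.mpr (hv.trans_le (le_abs_self _))
  have hcomp : connectedComponentIn {x | 0 < lorentzBilin u x x} v ⊆ {x | ‖x‖ < ⟪u, x⟫} :=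
    isPreconnected_connectedComponentIn.subset_left_of_subset_union
      (isOpen_lt continuous_norm hcont) (isOpen_lt continuous_norm hcont.neg) hdisj
      ((connectedComponentIn_subset _ _).trans hsplit) ⟨v, mem_connectedComponentIn hv₀, hv⟩
  exact closure_minimal (hcomp.trans (Set.ofPred_subset_ofPred.mpr fun _ => le_of_lt))
    (isClosed_le continuous_norm hcont)

theorem lorentzBilin_nonneg {u x y : E} (hx : ‖x‖ ≤ ⟪u, x⟫) (hy : ‖y‖ ≤ ⟪u, y⟫) :
    0 ≤ lorentzBilin u x y := by
  have := mul_le_mul hx hy (norm_nonneg y) ((norm_nonneg x).trans hx)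
  rw [lorentzBilin_apply]
  linarith [real_inner_le_norm x y]

theorem lorentzBilin_pos {u x y : E} (hx : ‖x‖ ≤ ⟪u, x⟫) (hy : ‖y‖ ≤ ⟪u, y⟫)
    (hxy : LinearIndependent ℝ ![x, y]) : 0 < lorentzBilin u x y := by
  refine (lorentzBilin_nonneg hx hy).lt_of_ne fun h => ?_
  -- equality would force equality in Cauchy–Schwarz, i.e. `x` and `y` proportional
  have hcs : ⟪x, y⟫ = ‖x‖ * ‖y‖ := by
    have := mul_le_mul hx hy (norm_nonneg y) ((norm_nonneg x).trans hx)
    rw [lorentzBilin_apply] at h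
    linarith [real_inner_le_norm x y]
  have hdep : ‖y‖ • x + (-‖x‖) • y = 0 := by
    rw [inner_eq_norm_mul_iff_real.mp hcs, neg_smul, add_neg_cancel]
  exact hxy.ne_zero 1 (norm_eq_zero.mp (LinearIndependent.pair_iff.mp hxy _ _ hdep).1)

end Lorentz

def minkowskiWeights (p : ℕ) : Fin p → ℝ := fun i => if (i : ℕ) = 0 then 1 else -1

theorem weightedSumSquares_minkowskiWeights_comp {p : ℕ} [NeZero p] :
    (QuadraticMap.weightedSumSquares ℝ (minkowskiWeights p)).comp
        (WithLp.linearEquiv 2 ℝ (Fin p → ℝ) : EuclideanSpace ℝ (Fin p) →ₗ[ℝ] Fin p → ℝ) =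
      (lorentzBilin (√2 • EuclideanSpace.single 0 1)).toQuadraticMap := by
  ext y
  simp only [QuadraticMap.comp_apply, QuadraticMap.weightedSumSquares_apply, minkowskiWeights,
    LinearMap.BilinMap.toQuadraticMap_apply, lorentzBilin_apply, real_inner_self_eq_norm_sq,
    EuclideanSpace.norm_sq_eq, real_inner_smul_left, EuclideanSpace.inner_single_left,
    LinearEquiv.coe_coe, WithLp.coe_linearEquiv, smul_eq_mul, map_one, one_mul, Real.norm_eq_abs,
    sq_abs]
  rw [← add_sum_erase _ _ (mem_univ 0), ← add_sum_erase _ _ (mem_univ 0),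
    sum_congr rfl fun i hi => by rw [if_neg (Fin.val_ne_zero_iff.mpr (ne_of_mem_erase hi))]]
  simp only [Fin.val_zero, if_true, neg_one_mul, sum_neg_distrib, ← sq]
  linear_combination -(y 0) ^ 2 * Real.mul_self_sqrt (zero_le_two : (0 : ℝ) ≤ 2)

namespace QuadraticForm

variable {V : Type*} [NormedAddCommGroup V] [NormedSpace ℝ V] {Q : QuadraticForm ℝ V}
  {v₀ x y : V}

section Model

variable {E : Type*} [NormedAddCommGroup E] [InnerProductSpace ℝ E] {e : V ≃L[ℝ] E} {u : E}

theorem associated_eq_lorentzBilin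
    (hQ : Q = (lorentzBilin u).toQuadraticMap.comp (e : V →ₗ[ℝ] E)) (x y : V) :
    QuadraticMap.associated Q x y = lorentzBilin u (e x) (e y) := by
  rw [hQ, QuadraticMap.associated_comp,
    QuadraticMap.associated_left_inverse ℝ (lorentzBilin_comm u)]
  rfl

theorem norm_le_inner_of_mem_closure
    (hQ : Q = (lorentzBilin u).toQuadraticMap.comp (e : V →ₗ[ℝ] E))
    (hv₀ : ‖e v₀‖ < ⟪u, e v₀⟫) (hx : x ∈ closure (connectedComponentIn {v | 0 < Q v} v₀)) :
    ‖e x‖ ≤ ⟪u, e x⟫ := by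
  have hmaps : Set.MapsTo e {v | 0 < Q v} {z | 0 < lorentzBilin u z z} := fun v hv => by
    rwa [hQ] at hv
  have hpos : v₀ ∈ {v | 0 < Q v} := by
    rw [hQ]; exact lorentzBilin_self_pos_iff.mpr (hv₀.trans_le (le_abs_self _))
  have hcomp := (e.continuous.continuousOn.mapsTo_connectedComponentIn hpos).mono_right
    (connectedComponentIn_mono _ hmaps.image_subset)
  exact closure_connectedComponentIn_subset hv₀ (hcomp.closure e.continuous hx)

end Model

variable [FiniteDimensional ℝ V] {p : ℕ} [NeZero p]

theorem exists_lorentzian_model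
    (hsig : Q.Equivalent (QuadraticMap.weightedSumSquares ℝ (minkowskiWeights p)))
    (hv₀ : 0 < Q v₀) :
    ∃ (e : V ≃L[ℝ] EuclideanSpace ℝ (Fin p)) (u : EuclideanSpace ℝ (Fin p)),
      Q = (lorentzBilin u).toQuadraticMap.comp (e : V →ₗ[ℝ] EuclideanSpace ℝ (Fin p)) ∧
        ‖e v₀‖ < ⟪u, e v₀⟫ := by
  obtain ⟨φ⟩ := hsig
  let e : V ≃L[ℝ] EuclideanSpace ℝ (Fin p) :=
    (φ.toLinearEquiv.trans (WithLp.linearEquiv 2 ℝ (Fin p → ℝ)).symm).toContinuousLinearEquiv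
  have hQ : Q = (lorentzBilin (√2 • EuclideanSpace.single 0 1)).toQuadraticMap.comp
      (e : V →ₗ[ℝ] EuclideanSpace ℝ (Fin p)) := by
    ext v
    rw [← weightedSumSquares_minkowskiWeights_comp, QuadraticMap.comp_apply, QuadraticMap.comp_apply,
      ← φ.map_app]
    rfl
  obtain ⟨u, hu, hv⟩ := exists_lorentzBilin_eq_and_norm_lt_inner (x := e v₀) (by rwa [hQ] at hv₀)
  exact ⟨e, u, hu ▸ hQ, hv⟩

theorem associated_nonneg_of_mem_closure
    (hsig : Q.Equivalent (QuadraticMap.weightedSumSquares ℝ (minkowskiWeights p))) (hv₀ : 0 < Q v₀)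
    (hx : x ∈ closure (connectedComponentIn {v | 0 < Q v} v₀))
    (hy : y ∈ closure (connectedComponentIn {v | 0 < Q v} v₀)) :
    0 ≤ QuadraticMap.associated Q x y := by
  obtain ⟨e, u, hQ, hv⟩ := exists_lorentzian_model hsig hv₀
  rw [associated_eq_lorentzBilin hQ]
  exact lorentzBilin_nonneg (norm_le_inner_of_mem_closure hQ hv hx)
    (norm_le_inner_of_mem_closure hQ hv hy)

theorem associated_pos_of_mem_closure
    (hsig : Q.Equivalent (QuadraticMap.weightedSumSquares ℝ (minkowskiWeights p))) (hv₀ : 0 < Q v₀)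
    (hx : x ∈ closure (connectedComponentIn {v | 0 < Q v} v₀))
    (hy : y ∈ closure (connectedComponentIn {v | 0 < Q v} v₀))
    (hxy : LinearIndependent ℝ ![x, y]) :
    0 < QuadraticMap.associated Q x y := by
  obtain ⟨e, u, hQ, hv⟩ := exists_lorentzian_model hsig hv₀
  rw [associated_eq_lorentzBilin hQ]
  refine lorentzBilin_pos (norm_le_inner_of_mem_closure hQ hv hx)
    (norm_le_inner_of_mem_closure hQ hv hy) (LinearIndependent.pair_iff.mpr fun s t h => ?_)
  exact LinearIndependent.pair_iff.mp hxy s t (e.injective (by simpa using h))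

end QuadraticForm

theorem stmt17_general {p m : ℕ} (hp : 1 ≤ p) {V : Type*} [NormedAddCommGroup V] [NormedSpace ℝ V]
    [FiniteDimensional ℝ V] (Q : QuadraticForm ℝ V)
    (hsig : Q.Equivalent (QuadraticMap.weightedSumSquares ℝ
      (fun i : Fin p => if (i : ℕ) = 0 then (1 : ℝ) else -1)))
    (v₀ : V) (hv₀ : 0 < Q v₀)
    (lam : Fin (m + 2) → V)
    (hlam : ∀ i, lam i ∈ closure (connectedComponentIn {v : V | 0 < Q v} v₀))
    (hindep : LinearIndependent ℝ lam)
    (R : ℝ) (hR1 : R < 1) :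
    ∃ c : ℝ, 0 < c ∧ ∀ r : Fin (m + 2) → ℝ, (∀ i, r i ∈ Set.Ioc 0 R) →
      c * |Real.log (r 0)| *
        (∏ i ∈ univ.erase 0, |Real.log (r i)|) ^ (1 / (m + 1 : ℝ))
        ≤ Q (∑ i, Real.log (r i) • lam i) := by
  have : NeZero p := ⟨by omega⟩
  set B := QuadraticMap.associated Q
  have hB : ∀ i j, 0 ≤ B (lam i) (lam j) := fun i j =>
    QuadraticForm.associated_nonneg_of_mem_closure hsig hv₀ (hlam i) (hlam j)
  have hB₀ : ∀ j ≠ 0, 0 < B (lam 0) (lam j) := fun j hj =>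
    QuadraticForm.associated_pos_of_mem_closure hsig hv₀ (hlam 0) (hlam j)
      (LinearIndependent.pair_iff.mpr
        ((LinearIndepOn.pair_iff lam hj.symm).mp (hindep.linearIndepOn _)))
  obtain ⟨j₀, hj₀, hmin⟩ :=
    (univ.erase 0).exists_min_image (fun j => B (lam 0) (lam j)) ⟨1, by simp⟩
  refine ⟨B (lam 0) (lam j₀), hB₀ j₀ (ne_of_mem_erase hj₀), fun r hr => ?_⟩
  have habs : ∀ i, |Real.log (r i)| = -Real.log (r i) := fun i =>
    abs_of_neg (Real.log_neg (hr i).1 ((hr i).2.trans_lt hR1))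
  have hcard : ((#(univ.erase (0 : Fin (m + 2))) : ℕ) : ℝ)⁻¹ = 1 / (m + 1 : ℝ) := by
    simp [card_erase_of_mem]
  calc _ ≤ B (lam 0) (lam j₀) * |Real.log (r 0)| * ∑ j ∈ univ.erase 0, |Real.log (r j)| := by
        gcongr
        · exact mul_nonneg (hB 0 j₀) (abs_nonneg _)
        · rw [← hcard]
          exact Real.prod_rpow_inv_card_le_sum ⟨1, by simp⟩ fun i _ => abs_nonneg _
    _ ≤ ∑ i, ∑ j, |Real.log (r i)| * |Real.log (r j)| * B (lam i) (lam j) :=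
        mul_sum_erase_le_sum_sum (s := fun i => |Real.log (r i)|) hB (fun i => abs_nonneg _)
          fun j hj => hmin j (mem_erase.mpr ⟨hj, mem_univ _⟩)
    _ = Q (∑ i, Real.log (r i) • lam i) := by
        rw [QuadraticForm.map_sum_smul]
        simp only [habs, neg_mul_neg]
        rfl

/-- Let `λ₀, …, λ_{μ-1}` (with `μ = m + 2 ≥ 2`) be linearly independent
vectors in the closure of one component `C⁺` of the positive cone of a real quadratic space
of signature `(1, p-1)`, and let `0 < R < 1`.  Then there is `c > 0` (independent of the
`rᵢ`) such that for all `r₀, …, r_{μ-1} ∈ (0, R]`,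
`Q (λ₀ log r₀ + ⋯ + λ_{μ-1} log r_{μ-1}) ≥ c |log r₀| (|log r₁| ⋯ |log r_{μ-1}|)^{1/(μ-1)}`. -/
theorem stmt17 {p m : ℕ} (hp : 1 ≤ p) {V : Type*} [NormedAddCommGroup V] [NormedSpace ℝ V]
    [FiniteDimensional ℝ V] (Q : QuadraticForm ℝ V)
    (hsig : Q.Equivalent (QuadraticMap.weightedSumSquares ℝ
      (fun i : Fin p => if (i : ℕ) = 0 then (1 : ℝ) else -1)))
    (v₀ : V) (hv₀ : 0 < Q v₀)
    (lam : Fin (m + 2) → V)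
    (hlam : ∀ i, lam i ∈ closure (connectedComponentIn {v : V | 0 < Q v} v₀))
    (hindep : LinearIndependent ℝ lam)
    (R : ℝ) (hR0 : 0 < R) (hR1 : R < 1) :
    ∃ c : ℝ, 0 < c ∧ ∀ r : Fin (m + 2) → ℝ, (∀ i, r i ∈ Set.Ioc 0 R) →
      c * |Real.log (r 0)| *
        (∏ i ∈ univ.erase 0, |Real.log (r i)|) ^ (1 / (m + 1 : ℝ))
        ≤ Q (∑ i, Real.log (r i) • lam i) :=
  stmt17_general hp Q hsig v₀ hv₀ lam hlam hindep R hR1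
end

section
/- Let K be a real quadratic space of signature (1,1), and let λ₁, λ₂ ∈ C̄⁺ be linearly independent with Q(λ₁) > 0 and Q(λ₂) > 0. Then for every ε ∈ (0,1) there exists c > 0 such that Q(t₁λ₁ + t₂λ₂) ≥ c t₁^{1+ε} t₂^{1−ε} for all t₁, t₂ ≥ 0. -/
open QuadraticMap

section aux

variable {V : Type*} [NormedAddCommGroup V] [NormedSpace ℝ V] [FiniteDimensional ℝ V]

lemma quad_expand (Q : QuadraticForm ℝ V) (a b : ℝ) (x y : V) :
    Q (a • x + b • y) = a * a * Q x + b * b * Q y + (a * b) * polar Q x y := by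
  have h : Q (a • x + b • y) = Q (a • x) + Q (b • y) + polar Q (a • x) (b • y) := by
    simp [QuadraticMap.polar]
  rw [h, polar_smul_left, polar_smul_right, QuadraticMap.map_smul, QuadraticMap.map_smul]
  simp [smul_eq_mul]; ring

lemma quad_continuous (Q : QuadraticForm ℝ V) : Continuous fun v : V => Q v := by
  let L : V →ₗ[ℝ] (V →L[ℝ] ℝ) :=
    (LinearMap.toContinuousLinearMap : (V →ₗ[ℝ] ℝ) ≃ₗ[ℝ] (V →L[ℝ] ℝ)).toLinearMap.comp
      Q.polarBilin
  have hL : Continuous L := L.continuous_of_finiteDimensional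
  have h : Continuous fun v : V => (L v) v := hL.clm_apply continuous_id
  have heq : (fun v : V => Q v) = fun v : V => (L v) v / 2 := by
    funext v
    have : (L v) v = polar Q v v := rfl
    rw [this, polar_self, two_smul]
    ring
  rw [heq]
  exact h.div_const 2

end aux

/-- Let `(V, Q)` be a real quadratic space of signature `(1, 1)` and let
`λ₁, λ₂` be linearly independent vectors in the closure of one component `C⁺` of the
positive cone with `Q λ₁ > 0` and `Q λ₂ > 0`.  Then for every `ε ∈ (0, 1)` there is `c > 0`
with `Q (t₁ λ₁ + t₂ λ₂) ≥ c t₁^{1+ε} t₂^{1-ε}` for all `t₁, t₂ ≥ 0`. -/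
theorem stmt18 {V : Type*} [NormedAddCommGroup V] [NormedSpace ℝ V]
    [FiniteDimensional ℝ V] (Q : QuadraticForm ℝ V)
    (hsig : Q.Equivalent (QuadraticMap.weightedSumSquares ℝ
      (fun i : Fin 2 => if (i : ℕ) = 0 then (1 : ℝ) else -1)))
    (v₀ : V) (hv₀ : 0 < Q v₀)
    (lam₁ lam₂ : V)
    (h₁ : lam₁ ∈ closure (connectedComponentIn {v : V | 0 < Q v} v₀))
    (h₂ : lam₂ ∈ closure (connectedComponentIn {v : V | 0 < Q v} v₀))
    (hindep : LinearIndependent ℝ ![lam₁, lam₂])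
    (hpos₁ : 0 < Q lam₁) (hpos₂ : 0 < Q lam₂) :
    ∀ ε : ℝ, 0 < ε → ε < 1 → ∃ c : ℝ, 0 < c ∧
      ∀ t₁ t₂ : ℝ, 0 ≤ t₁ → 0 ≤ t₂ →
        c * t₁ ^ (1 + ε) * t₂ ^ (1 - ε) ≤ Q (t₁ • lam₁ + t₂ • lam₂) := by
  intro ε hε hε1
  obtain ⟨e⟩ := hsig
  have hdim : Module.finrank ℝ V = 2 := by
    have := e.toLinearEquiv.finrank_eq
    simpa using this
  have hQcont := quad_continuous Q
  set S : Set V := {v : V | 0 < Q v} with hS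
  have hSopen : IsOpen S := isOpen_lt continuous_const hQcont
  set C : Set V := connectedComponentIn S v₀ with hC
  -- a point of the closure of C where Q is positive lies in C
  have key : ∀ lam : V, lam ∈ closure C → 0 < Q lam → lam ∈ C := by
    intro lam hcl hQlam
    have hlamS : lam ∈ S := hQlam
    have hopen : IsOpen (connectedComponentIn S lam) := hSopen.connectedComponentIn
    have hmem : lam ∈ connectedComponentIn S lam := mem_connectedComponentIn hlamS
    obtain ⟨y, hy1, hy2⟩ := _root_.mem_closure_iff.mp hcl _ hopen hmem
    have e1 : connectedComponentIn S lam = connectedComponentIn S y :=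
      connectedComponentIn_eq hy1
    have e2 : connectedComponentIn S v₀ = connectedComponentIn S y :=
      connectedComponentIn_eq hy2
    rw [hC, e2, ← e1]
    exact hmem
  have hlam₁C : lam₁ ∈ C := key _ h₁ hpos₁
  have hlam₂C : lam₂ ∈ C := key _ h₂ hpos₂
  -- the polar form of lam₁ does not vanish on C
  have hnz : ∀ v ∈ C, polar Q lam₁ v ≠ 0 := by
    intro v hvC hzero
    have hQv : 0 < Q v := connectedComponentIn_subset S v₀ hvC
    -- lam₁ and v are linearly independent
    have hli : LinearIndependent ℝ ![lam₁, v] := by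
      rw [linearIndependent_fin2]
      constructor
      · simp only [Matrix.cons_val_one, Matrix.head_cons, Matrix.cons_val_zero]
        intro h0
        rw [h0] at hQv; simp at hQv
      · intro a ha
        simp only [Matrix.cons_val_one, Matrix.head_cons, Matrix.cons_val_zero] at ha
        have : polar Q lam₁ (a • v) = polar Q lam₁ lam₁ := by rw [ha]
        rw [polar_smul_right, polar_self, hzero] at this
        have ha0 : (2 : ℝ) • Q lam₁ = 0 := by
          simpa using this.symm
        simp only [smul_eq_mul] at ha0
        nlinarith
    -- they form a basis, so Q is nonnegative on V
    have hcard : Fintype.card (Fin 2) = Module.finrank ℝ V := by simp [hdim]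
    let b := basisOfLinearIndependentOfCardEqFinrank hli hcard
    have hnonneg : ∀ w : V, 0 ≤ Q w := by
      intro w
      have hw : w = b.repr w 0 • lam₁ + b.repr w 1 • v := by
        have := b.sum_repr w
        rw [Fin.sum_univ_two] at this
        have hb0 : b 0 = lam₁ := by
          rw [coe_basisOfLinearIndependentOfCardEqFinrank]; rfl
        have hb1 : b 1 = v := by
          rw [coe_basisOfLinearIndependentOfCardEqFinrank]; rfl
        rw [hb0, hb1] at this
        exact this.symm
      rw [hw, quad_expand, hzero]
      nlinarith [sq_nonneg (b.repr w 0), sq_nonneg (b.repr w 1)]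
    -- but Q takes the value -1
    set x : Fin 2 → ℝ := ![0, 1] with hx
    have hQu : Q (e.symm x) = -1 := by
      have h1 := e.map_app (e.symm x)
      have h2 : e (e.symm x) = x := e.apply_symm_apply x
      rw [h2] at h1
      rw [← h1, weightedSumSquares_apply, Fin.sum_univ_two]
      norm_num [hx]
    have := hnonneg (e.symm x)
    rw [hQu] at this
    linarith
  -- the polar form of lam₁ is positive at lam₂, by connectedness
  have hP : 0 < polar Q lam₁ lam₂ := by
    by_contra hle
    push_neg at hle
    have hg : ContinuousOn (fun v : V => polar Q lam₁ v) C := by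
      have : Continuous fun v : V => polar Q lam₁ v :=
        (Q.polarBilin lam₁).continuous_of_finiteDimensional
      exact this.continuousOn
    have hpre : IsPreconnected C := (isPreconnected_connectedComponentIn)
    have hIcc := hpre.intermediate_value hlam₂C hlam₁C hg
    have h0 : (0 : ℝ) ∈ Set.Icc (polar Q lam₁ lam₂) (polar Q lam₁ lam₁) := by
      constructor
      · exact hle
      · rw [polar_self, two_smul]; linarith
    obtain ⟨v, hvC, hv0⟩ := hIcc h0
    exact hnz v hvC hv0
  -- finish with weighted AM–GM
  refine ⟨min (Q lam₁) (Q lam₂), lt_min hpos₁ hpos₂, ?_⟩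
  intro t₁ t₂ ht₁ ht₂
  set c := min (Q lam₁) (Q lam₂) with hc
  have hc₁ : c ≤ Q lam₁ := min_le_left _ _
  have hc₂ : c ≤ Q lam₂ := min_le_right _ _
  have hcpos : 0 < c := lt_min hpos₁ hpos₂
  -- AM-GM : t₁^(1+ε) * t₂^(1-ε) ≤ (1+ε)/2 * t₁^2 + (1-ε)/2 * t₂^2
  have hamgm : t₁ ^ (1 + ε) * t₂ ^ (1 - ε) ≤ (1 + ε) / 2 * t₁ ^ 2 + (1 - ε) / 2 * t₂ ^ 2 := by
    have h := Real.geom_mean_le_arith_mean2_weighted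
      (by linarith : (0:ℝ) ≤ (1 + ε) / 2) (by linarith : (0:ℝ) ≤ (1 - ε) / 2)
      (by positivity : (0:ℝ) ≤ t₁ ^ 2) (by positivity : (0:ℝ) ≤ t₂ ^ 2)
      (by ring : (1 + ε) / 2 + (1 - ε) / 2 = 1)
    have e₁ : (t₁ ^ 2) ^ ((1 + ε) / 2) = t₁ ^ (1 + ε) := by
      rw [← Real.rpow_natCast t₁ 2, ← Real.rpow_mul ht₁]
      congr 1; ring
    have e₂ : (t₂ ^ 2) ^ ((1 - ε) / 2) = t₂ ^ (1 - ε) := by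
      rw [← Real.rpow_natCast t₂ 2, ← Real.rpow_mul ht₂]
      congr 1; ring
    rw [e₁, e₂] at h
    linarith
  have hexp := quad_expand Q t₁ t₂ lam₁ lam₂
  rw [hexp]
  have hsum : t₁ ^ (1 + ε) * t₂ ^ (1 - ε) ≤ t₁ ^ 2 + t₂ ^ 2 := by
    nlinarith [sq_nonneg t₁, sq_nonneg t₂]
  nlinarith [mul_nonneg (mul_nonneg ht₁ ht₂) hP.le, sq_nonneg t₁, sq_nonneg t₂,
    mul_le_mul_of_nonneg_left hsum hcpos.le,
    mul_le_mul_of_nonneg_left hc₁ (sq_nonneg t₁),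
    mul_le_mul_of_nonneg_left hc₂ (sq_nonneg t₂)]
end
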